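/- arXiv:2105.11499 — 2 statements merged into one kernel-verified Lean document; each statement's English description precedes it below -/
import Mathlib

section
/- (GKM condition for substituted weight functions.) Let r ∈ {00,10,01,11}, σ ∈ S_n, J ∈ I_k, and let K be a (k−1)-element subset of {1,…,n} and i ≠ j two elements of {1,…,n} not in K; set U = K ∪ {i} and V = K ∪ {j}. Then the difference W^{(r)}_{σ,J}(z_U,z,ℏ) − W^{(r)}_{σ,J}(z_V,z,ℏ) is divisible by (z_i − z_j) in the polynomial ring ℂ[z_1,…,z_n,ℏ]. -/
open Finset

noncomputable section

open scoped Classical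

/-- Variables `t₁,…,t_k`, `z₁,…,z_n`, `ℏ`. -/
abbrev WVar (n k : ℕ) : Type := (Fin k ⊕ Fin n) ⊕ Unit

/-- The field `ℂ(t₁,…,t_k, z₁,…,z_n, ℏ)`. -/
abbrev WField (n k : ℕ) : Type := FractionRing (MvPolynomial (WVar n k) ℂ)

def tvar (n k : ℕ) (a : Fin k) : WField n k :=
  algebraMap (MvPolynomial (WVar n k) ℂ) (WField n k) (MvPolynomial.X (Sum.inl (Sum.inl a)))

def zvar (n k : ℕ) (b : Fin n) : WField n k :=
  algebraMap (MvPolynomial (WVar n k) ℂ) (WField n k) (MvPolynomial.X (Sum.inl (Sum.inr b)))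

def hvar (n k : ℕ) : WField n k :=
  algebraMap (MvPolynomial (WVar n k) ℂ) (WField n k) (MvPolynomial.X (Sum.inr ()))

/-- The factor attached to a pair `a < b` of `t`-indices, with `x = t_b - t_a`:
`1/((t_b-t_a+ℏ)(t_b-t_a))` for `r=00`, `1/(t_b-t_a)` for `r=10` and `r=01`,
`(t_b-t_a+ℏ)/(t_b-t_a)` for `r=11`.  Here `r = 00,10,01,11` is encoded as
`(false,false), (true,false), (false,true), (true,true)`. -/
def tPairFactor (r : Bool × Bool) {F : Type*} [Field F] (x h : F) : F :=
  match r with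
  | (false, false) => 1 / ((x + h) * x)
  | (true, false) => 1 / x
  | (false, true) => 1 / x
  | (true, true) => (x + h) / x

/-- `U^{(r)}_I`, as a function of the values `t_a`, `z_b`, `ℏ` in an arbitrary field,
where `idx : Fin k → Fin n` is the increasing enumeration `a ↦ i_a` of `I`. -/
def superU (r : Bool × Bool) {F : Type*} [Field F] {n k : ℕ} (idx : Fin k → Fin n)
    (t : Fin k → F) (z : Fin n → F) (h : F) : F :=
  (∏ a : Fin k,
    ((∏ b ∈ univ.filter (fun b : Fin n => b < idx a),
        (if r.2 then z b - t a + h else t a - z b + h)) *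
     (∏ b ∈ univ.filter (fun b : Fin n => idx a < b), (z b - t a)))) *
  (∏ a : Fin k, ∏ b ∈ univ.filter (fun b : Fin k => a < b), tPairFactor r (t b - t a) h) *
  (if r.2 then
     h ^ k * (∏ a : Fin n, ∏ b ∈ univ.filter (fun b : Fin n => a < b), (z b - z a + h)) *
       ∏ a : Fin k, ∏ b : Fin n, (z b - t a + h)⁻¹
   else 1)

/-- `W^{(r)}_I = Sym_k U^{(r)}_I`. -/
def superW (r : Bool × Bool) {F : Type*} [Field F] {n k : ℕ} (idx : Fin k → Fin n)
    (t : Fin k → F) (z : Fin n → F) (h : F) : F :=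
  ∑ τ : Equiv.Perm (Fin k), superU r idx (t ∘ τ) z h

/-- The increasing enumeration `i_1 < … < i_k` of a `k`-element subset of `{1,…,n}`. -/
def setIdx {n k : ℕ} (I : Finset (Fin n)) (hI : I.card = k) (a : Fin k) : Fin n :=
  (I.orderIsoOfFin hI a : Fin n)

/-- The super weight function `W^{(r)}_{σ,I} = W^{(r)}_{σ⁻¹(I)}(t₁,…,t_k,z_{σ(1)},…,z_{σ(n)},ℏ)`. -/
def weightW (r : Bool × Bool) {n k : ℕ} (σ : Equiv.Perm (Fin n))
    (I : Finset (Fin n)) (hI : I.card = k) : WField n k :=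
  superW r (setIdx (I.map σ.symm.toEmbedding) (by rw [Finset.card_map]; exact hI))
    (tvar n k) (fun b => zvar n k (σ b)) (hvar n k)

/-- Variables `z₁,…,z_n`, `ℏ`. -/
abbrev ZVar (n : ℕ) : Type := Fin n ⊕ Unit

/-- The field `ℂ(z₁,…,z_n,ℏ)`. -/
abbrev ZField (n : ℕ) : Type := FractionRing (MvPolynomial (ZVar n) ℂ)

def zval (n : ℕ) (b : Fin n) : ZField n :=
  algebraMap (MvPolynomial (ZVar n) ℂ) (ZField n) (MvPolynomial.X (Sum.inl b))

def hval (n : ℕ) : ZField n :=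
  algebraMap (MvPolynomial (ZVar n) ℂ) (ZField n) (MvPolynomial.X (Sum.inr ()))

/-- The substitution `W^{(r)}_{σ,J}(z_I, z, ℏ) ∈ ℂ(z₁,…,z_n,ℏ)`: substitute
`t_s = z_{i_s}` (where `I = {i_1 < … < i_k}`) into each of the `k!` terms of the
symmetrization defining `W^{(r)}_{σ,J}`, and sum the substituted terms. -/
def weightWSub (r : Bool × Bool) {n k : ℕ} (σ : Equiv.Perm (Fin n))
    (J : Finset (Fin n)) (hJ : J.card = k)
    (I : Finset (Fin n)) (hI : I.card = k) : ZField n :=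
  ∑ τ : Equiv.Perm (Fin k),
    superU r (setIdx (J.map σ.symm.toEmbedding) (by rw [Finset.card_map]; exact hJ))
      (fun a => zval n (setIdx I hI (τ a))) (fun b => zval n (σ b)) (hval n)


set_option maxHeartbeats 1600000
set_option synthInstance.maxHeartbeats 1000000

namespace GKMaux
open MvPolynomial

variable {σR : Type*}

lemma sub_aeval_mem (g : σR → MvPolynomial σR ℂ) (I : Ideal (MvPolynomial σR ℂ))
    (h : ∀ s, X s - g s ∈ I) (f : MvPolynomial σR ℂ) :
    f - aeval g f ∈ I := by
  induction f using MvPolynomial.induction_on with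
  | C a => simp
  | add p q hp hq =>
      have := I.add_mem hp hq
      convert this using 1
      simp only [map_add]; ring
  | mul_X p s hp =>
      have h1 : (p - aeval g p) * X s ∈ I := I.mul_mem_right _ hp
      have h2 : aeval g p * (X s - g s) ∈ I := I.mul_mem_left _ (h s)
      have := I.add_mem h1 h2
      convert this using 1
      simp only [map_mul, aeval_X]; ring

def Esub (s : σR) (v : MvPolynomial σR ℂ) : MvPolynomial σR ℂ →+* MvPolynomial σR ℂ :=
  (aeval (Function.update X s v)).toRingHom

@[simp] lemma Esub_X (s : σR) (v : MvPolynomial σR ℂ) (c : σR) :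
    Esub s v (X c) = if c = s then v else X c := by
  simp [Esub, Function.update_apply]

lemma Esub_sub_self_dvd (s : σR) (v : MvPolynomial σR ℂ) (f : MvPolynomial σR ℂ) :
    (X s - v) ∣ (f - Esub s v f) := by
  rw [← Ideal.mem_span_singleton]
  refine sub_aeval_mem _ _ (fun c => ?_) f
  by_cases hc : c = s
  · subst hc; simp only [Function.update_self]
    exact Ideal.mem_span_singleton_self _
  · simp [Function.update_of_ne hc]

lemma Esub_dvd_iff {s : σR} {v : MvPolynomial σR ℂ} (hv : Esub s v v = v)
    (f : MvPolynomial σR ℂ) : (X s - v) ∣ f ↔ Esub s v f = 0 := by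
  have hq : Esub s v (X s - v) = 0 := by
    rw [map_sub, Esub_X, if_pos rfl, hv, sub_self]
  constructor
  · rintro ⟨c, rfl⟩
    rw [map_mul, hq, zero_mul]
  · intro h
    have := Esub_sub_self_dvd s v f
    rwa [h, sub_zero] at this

lemma Esub_ker_eq {s : σR} {v : MvPolynomial σR ℂ} (hv : Esub s v v = v) :
    RingHom.ker (Esub s v) = Ideal.span {X s - v} := by
  ext f
  rw [RingHom.mem_ker, Ideal.mem_span_singleton, Esub_dvd_iff hv]

lemma Esub_prime {s : σR} {v : MvPolynomial σR ℂ} (hv : Esub s v v = v)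
    (h0 : (X s - v : MvPolynomial σR ℂ) ≠ 0) : Prime (X s - v) := by
  rw [← Ideal.span_singleton_prime h0, ← Esub_ker_eq hv]
  rw [← Ideal.Quotient.isDomain_iff_prime]
  have e := RingHom.quotientKerEquivRange (Esub s v)
  exact Function.Injective.isDomain e.toRingHom e.injective

lemma ne_zero_of_coeff {f : MvPolynomial σR ℂ} (m : σR →₀ ℕ)
    (h : MvPolynomial.coeff m f ≠ 0) : f ≠ 0 := fun hf => h (by simp [hf])

lemma coeff_X_single (c d : σR) :
    MvPolynomial.coeff (Finsupp.single d 1) (X c : MvPolynomial σR ℂ) =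
      if c = d then 1 else 0 := by
  rw [coeff_X']
  by_cases h : c = d
  · simp [h]
  · rw [if_neg, if_neg h]
    exact fun hh => h ((Finsupp.single_left_inj one_ne_zero).mp hh)


section ZStuff
variable {n : ℕ}

def XZ (c : Fin n) : MvPolynomial (ZVar n) ℂ := X (Sum.inl c)
def XH (n : ℕ) : MvPolynomial (ZVar n) ℂ := X (Sum.inr ())
def LZ (x y : Fin n) : MvPolynomial (ZVar n) ℂ := XZ x - XZ y
def LH (x y : Fin n) : MvPolynomial (ZVar n) ℂ := XZ y - XZ x + XH n

def EZ (x y : Fin n) : MvPolynomial (ZVar n) ℂ →+* MvPolynomial (ZVar n) ℂ :=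
  Esub (Sum.inl x) (XZ y)
def EH (x y : Fin n) : MvPolynomial (ZVar n) ℂ →+* MvPolynomial (ZVar n) ℂ :=
  Esub (Sum.inr ()) (XZ x - XZ y)

@[simp] lemma EZ_XZ (x y c : Fin n) : EZ x y (XZ c) = if c = x then XZ y else XZ c := by
  simp [EZ, XZ, Esub_X]

@[simp] lemma EZ_XH (x y : Fin n) : EZ x y (XH n) = XH n := by
  simp [EZ, XH, Esub_X]

@[simp] lemma EH_XZ (x y c : Fin n) : EH x y (XZ c) = XZ c := by
  simp [EH, XZ, Esub_X]

@[simp] lemma EH_XH (x y : Fin n) : EH x y (XH n) = XZ x - XZ y := by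
  simp [EH, XH, Esub_X]

lemma hvZ {x y : Fin n} (h : x ≠ y) : Esub (Sum.inl x) (XZ y) (XZ y) = XZ y := by
  simp [XZ, Esub_X, (Ne.symm h)]

lemma hvH (x y : Fin n) :
    Esub (Sum.inr ()) (XZ x - XZ y) (XZ x - XZ y) = XZ x - XZ y := by
  simp [XZ, Esub_X]

lemma LH_eq (x y : Fin n) : LH x y = X (Sum.inr ()) - (XZ x - XZ y) := by
  rw [LH, XH]; ring

lemma LZ_dvd_iff {x y : Fin n} (h : x ≠ y) (f : MvPolynomial (ZVar n) ℂ) :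
    LZ x y ∣ f ↔ EZ x y f = 0 :=
  Esub_dvd_iff (hvZ h) f

lemma LH_dvd_iff (x y : Fin n) (f : MvPolynomial (ZVar n) ℂ) :
    LH x y ∣ f ↔ EH x y f = 0 := by
  rw [LH_eq]; exact Esub_dvd_iff (hvH x y) f

lemma LZ_ne {x y : Fin n} (h : x ≠ y) : LZ x y ≠ 0 := by
  apply ne_zero_of_coeff (Finsupp.single (Sum.inl x) 1)
  simp [LZ, XZ, coeff_X_single, Ne.symm h]

lemma LH_ne (x y : Fin n) : LH x y ≠ 0 := by
  apply ne_zero_of_coeff (Finsupp.single (Sum.inr ()) 1)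
  simp [LH, XZ, XH, coeff_X_single]

lemma prime_LZ {x y : Fin n} (h : x ≠ y) : Prime (LZ x y) :=
  Esub_prime (hvZ h) (LZ_ne h)

lemma prime_LH (x y : Fin n) : Prime (LH x y) := by
  rw [LH_eq]
  exact Esub_prime (hvH x y) (by rw [← LH_eq]; exact LH_ne x y)

lemma EZ_LZ (x y a b : Fin n) :
    EZ x y (LZ a b) = LZ (if a = x then y else a) (if b = x then y else b) := by
  simp [LZ, map_sub, apply_ite XZ]

lemma EZ_LH (x y a b : Fin n) :
    EZ x y (LH a b) = LH (if a = x then y else a) (if b = x then y else b) := by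
  simp [LH, map_add, map_sub, apply_ite XZ]

lemma EZ_LH_ne (x y a b : Fin n) : EZ x y (LH a b) ≠ 0 := by
  rw [EZ_LH]; exact LH_ne _ _

lemma EZ_LZ_ne {x y a b : Fin n} (hxy : x ≠ y) (hab : a ≠ b)
    (h1 : ¬(a = x ∧ b = y)) (h2 : ¬(a = y ∧ b = x)) : EZ x y (LZ a b) ≠ 0 := by
  rw [EZ_LZ]
  apply LZ_ne
  split_ifs with ha hb hb
  · exact absurd (ha.trans hb.symm) hab
  · exact fun hyb => h1 ⟨ha, hyb.symm⟩
  · exact fun hay => h2 ⟨hay, hb⟩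
  · exact hab

lemma EH_LZ_ne {x y a b : Fin n} (hab : a ≠ b) : EH x y (LZ a b) ≠ 0 := by
  have : EH x y (LZ a b) = LZ a b := by simp [LZ, map_sub]
  rw [this]; exact LZ_ne hab

lemma EH_LH_ne {x y a b : Fin n} (hxy : x ≠ y) (hab : ¬(a = x ∧ b = y)) :
    EH x y (LH a b) ≠ 0 := by
  have hcalc : EH x y (LH a b) = XZ b - XZ a + (XZ x - XZ y) := by
    simp [LH, map_add, map_sub]
  rw [hcalc]
  by_cases hb : b = y
  · have ha : a ≠ x := fun h => hab ⟨h, hb⟩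
    have : XZ b - XZ a + (XZ x - XZ y) = LZ x a := by rw [hb, LZ]; ring
    rw [this]; exact LZ_ne (Ne.symm ha)
  · intro h0
    have h1 := congrArg (MvPolynomial.coeff (Finsupp.single (Sum.inl y) 1)) h0
    by_cases ha : a = y <;>
      simp [XZ, coeff_X_single, hb, ha, Ne.symm hxy, hxy] at h1

lemma EH_LH_ne' {x a b : Fin n} (hab : a ≠ b) : EH x x (LH a b) ≠ 0 := by
  have hcalc : EH x x (LH a b) = LZ b a := by
    simp [LH, LZ, map_add, map_sub]
  rw [hcalc]; exact LZ_ne (Ne.symm hab)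

end ZStuff


section TermRep
variable {n k : ℕ}

def KP (k : ℕ) : Finset (Fin k × Fin k) := (univ : Finset (Fin k × Fin k)).filter (fun p => p.1 < p.2)
def NP (n : ℕ) : Finset (Fin n × Fin n) := (univ : Finset (Fin n × Fin n)).filter (fun p => p.1 < p.2)

lemma prod_pairs {M : Type*} [CommMonoid M] {m : ℕ} (g : Fin m → Fin m → M) :
    ∏ p ∈ (univ : Finset (Fin m × Fin m)).filter (fun p => p.1 < p.2), g p.1 p.2
      = ∏ a, ∏ b ∈ univ.filter (fun b => a < b), g a b := by
  rw [Finset.prod_filter, ← Finset.univ_product_univ, Finset.prod_product]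
  exact Finset.prod_congr rfl fun a _ => (Finset.prod_filter _ _).symm

lemma prod_mixed {M : Type*} [CommMonoid M] {m l : ℕ} (g : Fin m → Fin l → M) :
    ∏ p ∈ (univ : Finset (Fin m × Fin l)), g p.1 p.2 = ∏ a, ∏ b, g a b := by
  rw [← Finset.univ_product_univ, Finset.prod_product]

def fB (r : Bool × Bool) (σf : Fin n → Fin n) (w : Fin k → Fin n) (a : Fin k) (b : Fin n) :
    MvPolynomial (ZVar n) ℂ :=
  if r.2 then LH (w a) (σf b) else LH (σf b) (w a)

def numPoly (r : Bool × Bool) (idx : Fin k → Fin n) (σf : Fin n → Fin n) (w : Fin k → Fin n) :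
    MvPolynomial (ZVar n) ℂ :=
  (∏ a : Fin k, ((∏ b ∈ univ.filter (fun b : Fin n => b < idx a), fB r σf w a b) *
      ∏ b ∈ univ.filter (fun b : Fin n => idx a < b), LZ (σf b) (w a))) *
  (if r = (true, true) then ∏ p ∈ KP k, LH (w p.1) (w p.2) else 1) *
  (if r.2 then XH n ^ k * ∏ p ∈ NP n, LH (σf p.1) (σf p.2) else 1)

def denPoly (r : Bool × Bool) (σf : Fin n → Fin n) (w : Fin k → Fin n) :
    MvPolynomial (ZVar n) ℂ :=
  (∏ p ∈ KP k, LZ (w p.2) (w p.1)) *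
  (if r = (false, false) then ∏ p ∈ KP k, LH (w p.1) (w p.2) else 1) *
  (if r.2 then ∏ p ∈ (univ : Finset (Fin k × Fin n)), LH (w p.1) (σf p.2) else 1)

lemma term_rep (r : Bool × Bool) (idx : Fin k → Fin n) (σf : Fin n → Fin n)
    (w : Fin k → Fin n) :
    superU r idx (fun a => algebraMap (MvPolynomial (ZVar n) ℂ) (ZField n) (XZ (w a)))
        (fun b => algebraMap (MvPolynomial (ZVar n) ℂ) (ZField n) (XZ (σf b)))
        (algebraMap (MvPolynomial (ZVar n) ℂ) (ZField n) (XH n))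
      = algebraMap (MvPolynomial (ZVar n) ℂ) (ZField n) (numPoly r idx σf w) *
        (algebraMap (MvPolynomial (ZVar n) ℂ) (ZField n) (denPoly r σf w))⁻¹ := by
  set ι := algebraMap (MvPolynomial (ZVar n) ℂ) (ZField n)
  obtain ⟨r1, r2⟩ := r
  have hP1 : ∀ rr : Bool × Bool,
      ι ((∏ a : Fin k, ((∏ b ∈ univ.filter (fun b : Fin n => b < idx a), fB rr σf w a b) *
        ∏ b ∈ univ.filter (fun b : Fin n => idx a < b), LZ (σf b) (w a))))
      = ∏ a : Fin k,
          ((∏ b ∈ univ.filter (fun b : Fin n => b < idx a),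
            (if rr.2 then ι (XZ (σf b)) - ι (XZ (w a)) + ι (XH n)
             else ι (XZ (w a)) - ι (XZ (σf b)) + ι (XH n))) *
           (∏ b ∈ univ.filter (fun b : Fin n => idx a < b), (ι (XZ (σf b)) - ι (XZ (w a))))) := by
    intro rr
    rw [map_prod]
    refine Finset.prod_congr rfl fun a _ => ?_
    rw [map_mul, map_prod, map_prod]
    congr 1
    · refine Finset.prod_congr rfl fun b _ => ?_
      by_cases h : rr.2 <;> simp [fB, h, LH, map_add, map_sub]
    · refine Finset.prod_congr rfl fun b _ => ?_
      simp [LZ, map_sub]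
  have hVD : ι (∏ p ∈ KP k, LZ (w p.2) (w p.1))
      = ∏ a : Fin k, ∏ b ∈ univ.filter (fun b => a < b), (ι (XZ (w b)) - ι (XZ (w a))) := by
    rw [map_prod, KP, prod_pairs (fun a b => ι (LZ (w b) (w a)))]
    exact Finset.prod_congr rfl fun a _ => Finset.prod_congr rfl fun b _ => by
      simp [LZ, map_sub]
  have hHD : ι (∏ p ∈ KP k, LH (w p.1) (w p.2))
      = ∏ a : Fin k, ∏ b ∈ univ.filter (fun b => a < b),
          (ι (XZ (w b)) - ι (XZ (w a)) + ι (XH n)) := by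
    rw [map_prod, KP, prod_pairs (fun a b => ι (LH (w a) (w b)))]
    exact Finset.prod_congr rfl fun a _ => Finset.prod_congr rfl fun b _ => by
      simp [LH, map_add, map_sub]
  have hNP : ι (∏ p ∈ NP n, LH (σf p.1) (σf p.2))
      = ∏ a : Fin n, ∏ b ∈ univ.filter (fun b => a < b),
          (ι (XZ (σf b)) - ι (XZ (σf a)) + ι (XH n)) := by
    rw [map_prod, NP, prod_pairs (fun a b => ι (LH (σf a) (σf b)))]
    exact Finset.prod_congr rfl fun a _ => Finset.prod_congr rfl fun b _ => by
      simp [LH, map_add, map_sub]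
  have hM : ι (∏ p ∈ (univ : Finset (Fin k × Fin n)), LH (w p.1) (σf p.2))
      = ∏ a : Fin k, ∏ b : Fin n, (ι (XZ (σf b)) - ι (XZ (w a)) + ι (XH n)) := by
    rw [map_prod, prod_mixed (fun a b => ι (LH (w a) (σf b)))]
    exact Finset.prod_congr rfl fun a _ => Finset.prod_congr rfl fun b _ => by
      simp [LH, map_add, map_sub]
  cases r1 <;> cases r2 <;>
    simp only [superU, tPairFactor, numPoly, denPoly, map_mul, map_pow, map_one,
      if_true, if_false, Bool.false_eq_true, ite_true, ite_false, reduceIte,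
      Prod.mk.injEq, and_self, and_false, false_and, true_and, Bool.true_eq_false,
      hP1 (false, false), hP1 (true, false), hP1 (false, true), hP1 (true, true),
      hVD, hHD, hNP, hM, mul_one, one_mul]
  all_goals simp only [one_div, div_eq_mul_inv, mul_inv, Finset.prod_mul_distrib,
    Finset.prod_inv_distrib, Finset.prod_const_one, mul_one]
  all_goals try ring

end TermRep


section Factors
variable {n k : ℕ}

lemma E_swap_XZ {E : MvPolynomial (ZVar n) ℂ →+* MvPolynomial (ZVar n) ℂ}
    {sw : Fin n → Fin n} (hE : ∀ c, E (XZ (sw c)) = E (XZ c)) :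
    (∀ x y, E (LZ (sw x) (sw y)) = E (LZ x y)) ∧
    (∀ x y, E (LH (sw x) y) = E (LH x y)) ∧
    (∀ x y, E (LH x (sw y)) = E (LH x y)) ∧
    (∀ x y, E (LH (sw x) (sw y)) = E (LH x y)) := by
  refine ⟨fun x y => ?_, fun x y => ?_, fun x y => ?_, fun x y => ?_⟩ <;>
    simp only [LZ, LH, map_sub, map_add, hE]

lemma E_swap_num (E : MvPolynomial (ZVar n) ℂ →+* MvPolynomial (ZVar n) ℂ)
    (sw : Fin n → Fin n) (hE : ∀ c, E (XZ (sw c)) = E (XZ c))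
    (r : Bool × Bool) (idx : Fin k → Fin n) (σf : Fin n → Fin n) (w : Fin k → Fin n) :
    E (numPoly r idx σf (fun a => sw (w a))) = E (numPoly r idx σf w) := by
  obtain ⟨eLZ, eLH1, eLH2, eLHb⟩ := E_swap_XZ hE
  have hfB : ∀ (a : Fin k) (b : Fin n), E (fB r σf (fun a => sw (w a)) a b) = E (fB r σf w a b) := by
    intro a b
    by_cases h : r.2 <;>
      simp only [fB, h, if_true, if_false, Bool.false_eq_true, ite_true, ite_false, eLH1, eLH2]
  have hLZc : ∀ (a : Fin k) (b : Fin n), E (LZ (σf b) (sw (w a))) = E (LZ (σf b) (w a)) := by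
    intro a b; simp only [LZ, map_sub, hE]
  have hA : E (∏ a : Fin k, ((∏ b ∈ univ.filter (fun b : Fin n => b < idx a),
        fB r σf (fun a => sw (w a)) a b) *
      ∏ b ∈ univ.filter (fun b : Fin n => idx a < b), LZ (σf b) (sw (w a))))
      = E (∏ a : Fin k, ((∏ b ∈ univ.filter (fun b : Fin n => b < idx a), fB r σf w a b) *
      ∏ b ∈ univ.filter (fun b : Fin n => idx a < b), LZ (σf b) (w a))) := by
    rw [map_prod, map_prod]
    refine Finset.prod_congr rfl fun a _ => ?_
    rw [map_mul, map_mul, map_prod, map_prod, map_prod, map_prod]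
    rw [Finset.prod_congr rfl (fun b _ => hfB a b),
      Finset.prod_congr rfl (fun b _ => hLZc a b)]
  have hB : E (if r = (true, true) then ∏ p ∈ KP k, LH (sw (w p.1)) (sw (w p.2)) else 1)
      = E (if r = (true, true) then ∏ p ∈ KP k, LH (w p.1) (w p.2) else 1) := by
    split_ifs with h
    · rw [map_prod, map_prod]
      exact Finset.prod_congr rfl fun p _ => eLHb _ _
    · rfl
  simp only [numPoly, map_mul]
  rw [hA, hB]

lemma E_swap_den (E : MvPolynomial (ZVar n) ℂ →+* MvPolynomial (ZVar n) ℂ)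
    (sw : Fin n → Fin n) (hE : ∀ c, E (XZ (sw c)) = E (XZ c))
    (r : Bool × Bool) (σf : Fin n → Fin n) (w : Fin k → Fin n) :
    E (denPoly r σf (fun a => sw (w a))) = E (denPoly r σf w) := by
  obtain ⟨eLZ, eLH1, eLH2, eLHb⟩ := E_swap_XZ hE
  have hA : E (∏ p ∈ KP k, LZ (sw (w p.2)) (sw (w p.1)))
      = E (∏ p ∈ KP k, LZ (w p.2) (w p.1)) := by
    rw [map_prod, map_prod]
    exact Finset.prod_congr rfl fun p _ => eLZ _ _
  have hB : E (if r = (false, false) then ∏ p ∈ KP k, LH (sw (w p.1)) (sw (w p.2)) else 1)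
      = E (if r = (false, false) then ∏ p ∈ KP k, LH (w p.1) (w p.2) else 1) := by
    split_ifs with h
    · rw [map_prod, map_prod]
      exact Finset.prod_congr rfl fun p _ => eLHb _ _
    · rfl
  have hC : E (if r.2 then ∏ p ∈ (univ : Finset (Fin k × Fin n)), LH (sw (w p.1)) (σf p.2) else 1)
      = E (if r.2 then ∏ p ∈ (univ : Finset (Fin k × Fin n)), LH (w p.1) (σf p.2) else 1) := by
    split_ifs with h
    · rw [map_prod, map_prod]
      exact Finset.prod_congr rfl fun p _ => eLH1 _ _
    · rfl
  simp only [denPoly, map_mul]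
  rw [hA, hB, hC]

lemma not_dvd_prod {α : Type*} {q : MvPolynomial (ZVar n) ℂ} (hq : Prime q)
    {s : Finset α} {f : α → MvPolynomial (ZVar n) ℂ}
    (h : ∀ p ∈ s, ¬ q ∣ f p) : ¬ q ∣ ∏ p ∈ s, f p := fun hd => by
  obtain ⟨p, hp, hd'⟩ := hq.exists_mem_finset_dvd hd
  exact h p hp hd'

lemma LZ_not_dvd_LZ {x y a b : Fin n} (hxy : x ≠ y) (hab : a ≠ b)
    (h1 : ¬(a = x ∧ b = y)) (h2 : ¬(a = y ∧ b = x)) : ¬ LZ x y ∣ LZ a b := by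
  rw [LZ_dvd_iff hxy]; exact EZ_LZ_ne hxy hab h1 h2

lemma LZ_not_dvd_LH {x y : Fin n} (hxy : x ≠ y) (a b : Fin n) : ¬ LZ x y ∣ LH a b := by
  rw [LZ_dvd_iff hxy]; exact EZ_LH_ne x y a b

lemma LH_not_dvd_LZ (x y : Fin n) {a b : Fin n} (hab : a ≠ b) : ¬ LH x y ∣ LZ a b := by
  rw [LH_dvd_iff]; exact EH_LZ_ne hab

lemma LH_not_dvd_LH {x y a b : Fin n} (hxy : x ≠ y) (hne : ¬(a = x ∧ b = y)) :
    ¬ LH x y ∣ LH a b := by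
  rw [LH_dvd_iff]; exact EH_LH_ne hxy hne

lemma XH_not_dvd_LH (x : Fin n) {a b : Fin n} (hab : a ≠ b) : ¬ LH x x ∣ LH a b := by
  rw [LH_dvd_iff]; exact EH_LH_ne' hab

lemma denPoly_ne (r : Bool × Bool) (σf : Fin n → Fin n) {w : Fin k → Fin n}
    (hw : Function.Injective w) : denPoly r σf w ≠ 0 := by
  have hKP : ∀ p : Fin k × Fin k, p ∈ KP k → w p.2 ≠ w p.1 := by
    intro p hp
    simp only [KP, Finset.mem_filter] at hp
    exact fun h => absurd (hw h) (ne_of_gt hp.2)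
  apply mul_ne_zero; apply mul_ne_zero
  · rw [Finset.prod_ne_zero_iff]
    exact fun p hp => LZ_ne (hKP p hp)
  · split_ifs
    · rw [Finset.prod_ne_zero_iff]; exact fun p _ => LH_ne _ _
    · exact one_ne_zero
  · split_ifs
    · rw [Finset.prod_ne_zero_iff]; exact fun p _ => LH_ne _ _
    · exact one_ne_zero

lemma denPoly_split (r : Bool × Bool) (σf : Fin n → Fin n) (w : Fin k → Fin n)
    {p₀ : Fin k × Fin k} (hp₀ : p₀ ∈ KP k) :
    denPoly r σf w = LZ (w p₀.2) (w p₀.1) *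
      ((∏ p ∈ (KP k).erase p₀, LZ (w p.2) (w p.1)) *
       (if r = (false, false) then ∏ p ∈ KP k, LH (w p.1) (w p.2) else 1) *
       (if r.2 then ∏ p ∈ (univ : Finset (Fin k × Fin n)), LH (w p.1) (σf p.2) else 1)) := by
  rw [denPoly, ← Finset.mul_prod_erase _ _ hp₀]; ring

lemma denPoly_split00 (σf : Fin n → Fin n) (w : Fin k → Fin n)
    {p₀ : Fin k × Fin k} (hp₀ : p₀ ∈ KP k) :
    denPoly (false, false) σf w = LH (w p₀.1) (w p₀.2) *
      ((∏ p ∈ KP k, LZ (w p.2) (w p.1)) * ∏ p ∈ (KP k).erase p₀, LH (w p.1) (w p.2)) := by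
  have h1 : denPoly (false, false) σf w
      = (∏ p ∈ KP k, LZ (w p.2) (w p.1)) * ∏ p ∈ KP k, LH (w p.1) (w p.2) := by
    simp only [denPoly, reduceIte, Bool.false_eq_true, if_false, mul_one]
  rw [h1, ← Finset.mul_prod_erase _ (fun p => LH (w p.1) (w p.2)) hp₀]
  ring

lemma denPoly_splitM (r : Bool × Bool) (σf : Fin n → Fin n) (w : Fin k → Fin n)
    (hr : r.2 = true) (m₀ : Fin k × Fin n) :
    denPoly r σf w = LH (w m₀.1) (σf m₀.2) *
      ((∏ p ∈ KP k, LZ (w p.2) (w p.1)) *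
       ∏ p ∈ (univ : Finset (Fin k × Fin n)).erase m₀, LH (w p.1) (σf p.2)) := by
  have hne : r ≠ (false, false) := fun h => by rw [h] at hr; exact Bool.false_ne_true hr
  simp only [denPoly, hr, if_pos, if_neg hne, one_mul, if_true]
  rw [← Finset.mul_prod_erase _ (fun p : Fin k × Fin n => LH (w p.1) (σf p.2)) (mem_univ m₀)]
  ring

lemma denPoly_splitH (r : Bool × Bool) (σ : Equiv.Perm (Fin n)) (w : Fin k → Fin n)
    (hr : r.2 = true) :
    denPoly r (⇑σ) w = XH n ^ k *
      ((∏ p ∈ KP k, LZ (w p.2) (w p.1)) *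
       ∏ p ∈ (univ : Finset (Fin k × Fin n)).filter (fun p => ¬ σ p.2 = w p.1),
         LH (w p.1) (σ p.2)) := by
  have hne : r ≠ (false, false) := fun h => by rw [h] at hr; exact Bool.false_ne_true hr
  simp only [denPoly, hr, if_neg hne, one_mul, if_true]
  rw [← Finset.prod_filter_mul_prod_filter_not (univ : Finset (Fin k × Fin n))
    (fun p => σ p.2 = w p.1) (fun p => LH (w p.1) (σ p.2))]
  have h1 : ∏ p ∈ (univ : Finset (Fin k × Fin n)).filter (fun p => σ p.2 = w p.1),
      LH (w p.1) (σ p.2) = XH n ^ k := by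
    rw [Finset.prod_congr rfl (fun p hp => ?_), Finset.prod_const]
    · congr 1
      rw [Finset.card_filter]
      rw [← Finset.univ_product_univ, Finset.sum_product]
      have : ∀ a : Fin k, (∑ b : Fin n, if σ b = w a then 1 else 0) = 1 := by
        intro a
        have hcond : ∀ b : Fin n, (σ b = w a) = (b = σ.symm (w a)) := by
          intro b
          simp [Equiv.apply_eq_iff_eq_symm_apply]
        simp only [hcond]
        rw [Finset.sum_ite_eq' univ (σ.symm (w a)) (fun _ => 1)]
        simp
      simp [this]
    · simp only [Finset.mem_filter] at hp
      rw [LH, hp.2, sub_self, zero_add]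
  rw [h1]; ring

end Factors

section NoPoleSec
variable {n k : ℕ}

local notation "ιF" => algebraMap (MvPolynomial (ZVar n) ℂ) (ZField n)

lemma iota_inj : Function.Injective (ιF : MvPolynomial (ZVar n) ℂ →+* ZField n) :=
  IsFractionRing.injective _ _

lemma iota_ne {b : MvPolynomial (ZVar n) ℂ} (hb : b ≠ 0) : (ιF b : ZField n) ≠ 0 := by
  rw [Ne, IsFractionRing.to_map_eq_zero_iff]; exact hb

def NoPole (q : MvPolynomial (ZVar n) ℂ) (x : ZField n) : Prop :=
  ∃ a b : MvPolynomial (ZVar n) ℂ, ¬ q ∣ b ∧ x * ιF b = ιF a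

lemma NoPole.zero {q : MvPolynomial (ZVar n) ℂ} (hq : Prime q) : NoPole q 0 :=
  ⟨0, 1, fun h => hq.not_unit (isUnit_of_dvd_one h), by simp⟩

lemma NoPole.add {q : MvPolynomial (ZVar n) ℂ} (hq : Prime q) {x y : ZField n}
    (hx : NoPole q x) (hy : NoPole q y) : NoPole q (x + y) := by
  obtain ⟨a, b, hb, hab⟩ := hx
  obtain ⟨c, d, hd, hcd⟩ := hy
  refine ⟨a * d + c * b, b * d, fun h => ?_, ?_⟩
  · rcases hq.dvd_mul.mp h with h | h
    exacts [hb h, hd h]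
  · rw [map_mul, map_add, map_mul, map_mul, ← hab, ← hcd]; ring

lemma NoPole.sum {q : MvPolynomial (ZVar n) ℂ} (hq : Prime q) {α : Type*}
    {s : Finset α} {f : α → ZField n} (h : ∀ a ∈ s, NoPole q (f a)) :
    NoPole q (∑ a ∈ s, f a) :=
  Finset.sum_induction f (NoPole q) (fun _ _ => NoPole.add hq) (NoPole.zero hq) h

lemma NoPole.of_rep {q N D : MvPolynomial (ZVar n) ℂ} (hd : ¬ q ∣ D) :
    NoPole q (ιF N * (ιF D)⁻¹ : ZField n) := by
  refine ⟨N, D, hd, ?_⟩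
  have hD : D ≠ 0 := fun h => hd (h ▸ dvd_zero q)
  field_simp [iota_ne hD]

lemma NoPole.of_rep_cancel {q N D c m N₁ : MvPolynomial (ZVar n) ℂ}
    (hD : D = c * m) (hc : c ≠ 0) (hm : ¬ q ∣ m) (hN : N = c * N₁) :
    NoPole q (ιF N * (ιF D)⁻¹ : ZField n) := by
  refine ⟨N₁, m, hm, ?_⟩
  have hm0 : m ≠ 0 := fun h => hm (h ▸ dvd_zero q)
  subst hD hN
  rw [map_mul, map_mul, mul_inv]
  field_simp [iota_ne hc, iota_ne hm0]

lemma NoPole.of_associated {q q' : MvPolynomial (ZVar n) ℂ} (h : Associated q q')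
    {x : ZField n} (hx : NoPole q x) : NoPole q' x := by
  obtain ⟨a, b, hb, hab⟩ := hx
  exact ⟨a, b, fun hd => hb ((Associated.dvd_iff_dvd_left h).mpr hd), hab⟩

lemma eq_image_of_noPoles (x : ZField n) :
    ∀ B N : MvPolynomial (ZVar n) ℂ, B ≠ 0 → x * ιF B = ιF N →
    (∀ q : MvPolynomial (ZVar n) ℂ, Prime q → q ∣ B → NoPole q x) →
    ∃ P, x = ιF P := by
  intro B
  induction B using UniqueFactorizationMonoid.induction_on_prime with
  | h₁ => exact fun N h _ _ => absurd rfl h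
  | h₂ u hu =>
      intro N _ hN _
      obtain ⟨v, hv⟩ := hu.exists_right_inv
      refine ⟨N * v, ?_⟩
      have := congrArg (· * ιF v) hN
      simp only [mul_assoc, ← map_mul] at this
      rw [hv, map_one, mul_one] at this
      rw [this, map_mul]
  | h₃ a p ha hp IH =>
      intro N hpa hN hq
      obtain ⟨c, b, hb, hcb⟩ := hq p hp (dvd_mul_right p a)
      have hbne : b ≠ 0 := fun h => hb (h ▸ dvd_zero p)
      have key : N * b = c * (p * a) := by
        apply iota_inj
        have h1 : ιF (N * b) = (x * ιF (p * a)) * ιF b := by rw [map_mul, hN]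
        have h2 : ιF (c * (p * a)) = (x * ιF b) * ιF (p * a) := by rw [map_mul, hcb]
        rw [h1, h2]; ring
      have hpN : p ∣ N := by
        have : p ∣ N * b := ⟨c * a, by rw [key]; ring⟩
        rcases hp.dvd_mul.mp this with h | h
        · exact h
        · exact absurd h hb
      obtain ⟨N₁, rfl⟩ := hpN
      have hxa : x * ιF a = ιF N₁ := by
        have hp0 : (ιF p : ZField n) ≠ 0 := iota_ne hp.ne_zero
        apply mul_left_cancel₀ hp0
        calc ιF p * (x * ιF a) = x * ιF (p * a) := by rw [map_mul]; ring
          _ = ιF (p * N₁) := hN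
          _ = ιF p * ιF N₁ := by rw [map_mul]
      exact IH N₁ ha hxa (fun q hq' hd => hq q hq' (hd.mul_left p))

end NoPoleSec


section MainLemmas
variable {n k : ℕ}

local notation "ιF" => algebraMap (MvPolynomial (ZVar n) ℂ) (ZField n)

lemma mem_KP {p : Fin k × Fin k} : p ∈ KP k ↔ p.1 < p.2 := by simp [KP]

lemma mem_NP {p : Fin n × Fin n} : p ∈ NP n ↔ p.1 < p.2 := by simp [NP]

lemma dvd_num_inner1 (r : Bool × Bool) (idx : Fin k → Fin n) (σf : Fin n → Fin n)
    (w : Fin k → Fin n) {q : MvPolynomial (ZVar n) ℂ} {a : Fin k} {b : Fin n}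
    (hb : b < idx a) (hq : q = fB r σf w a b) : q ∣ numPoly r idx σf w := by
  have h1 : q ∣ ∏ b ∈ univ.filter (fun b : Fin n => b < idx a), fB r σf w a b := by
    rw [hq]; exact Finset.dvd_prod_of_mem _ (by simp [hb])
  have h2 := h1.mul_right (∏ b ∈ univ.filter (fun b : Fin n => idx a < b), LZ (σf b) (w a))
  have h3 := h2.trans (Finset.dvd_prod_of_mem
    (fun a : Fin k => (∏ b ∈ univ.filter (fun b : Fin n => b < idx a), fB r σf w a b) *
      ∏ b ∈ univ.filter (fun b : Fin n => idx a < b), LZ (σf b) (w a)) (mem_univ a))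
  exact (h3.mul_right _).mul_right _

lemma num_zero_inner2 (r : Bool × Bool) (idx : Fin k → Fin n) (σf : Fin n → Fin n)
    (w : Fin k → Fin n) {a : Fin k} {b : Fin n}
    (hb : idx a < b) (h0 : σf b = w a) : numPoly r idx σf w = 0 := by
  have h1 : LZ (σf b) (w a) = 0 := by rw [h0, LZ, sub_self]
  have h2 : (∏ b ∈ univ.filter (fun b : Fin n => idx a < b), LZ (σf b) (w a)) = 0 :=
    Finset.prod_eq_zero (by simp [hb]) h1
  have h3 : (∏ a : Fin k, ((∏ b ∈ univ.filter (fun b : Fin n => b < idx a), fB r σf w a b) *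
      ∏ b ∈ univ.filter (fun b : Fin n => idx a < b), LZ (σf b) (w a))) = 0 :=
    Finset.prod_eq_zero (mem_univ a) (by rw [h2, mul_zero])
  rw [numPoly, h3, zero_mul, zero_mul]

lemma dvd_num_NP (r : Bool × Bool) (idx : Fin k → Fin n) (σf : Fin n → Fin n)
    (w : Fin k → Fin n) (hr : r.2 = true) {q : MvPolynomial (ZVar n) ℂ}
    {p : Fin n × Fin n} (hp : p.1 < p.2)
    (hq : q = LH (σf p.1) (σf p.2)) : q ∣ numPoly r idx σf w := by
  have h1 : q ∣ ∏ p ∈ NP n, LH (σf p.1) (σf p.2) := by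
    rw [hq]
    exact Finset.dvd_prod_of_mem (fun p : Fin n × Fin n => LH (σf p.1) (σf p.2))
      (mem_NP.mpr hp)
  have h2 : q ∣ (if r.2 then XH n ^ k * ∏ p ∈ NP n, LH (σf p.1) (σf p.2) else 1) := by
    rw [hr, if_pos rfl]; exact h1.mul_left _
  exact h2.mul_left _

lemma numPoly_H (r : Bool × Bool) (idx : Fin k → Fin n) (σf : Fin n → Fin n)
    (w : Fin k → Fin n) (hr : r.2 = true) :
    numPoly r idx σf w = XH n ^ k *
      ((∏ a : Fin k, ((∏ b ∈ univ.filter (fun b : Fin n => b < idx a), fB r σf w a b) *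
        ∏ b ∈ univ.filter (fun b : Fin n => idx a < b), LZ (σf b) (w a))) *
       (if r = (true, true) then ∏ p ∈ KP k, LH (w p.1) (w p.2) else 1) *
       ∏ p ∈ NP n, LH (σf p.1) (σf p.2)) := by
  simp only [numPoly, hr, if_true]; ring

lemma LH_self (x : Fin n) : LH x x = XH n := by rw [LH]; ring

lemma XH_ne : (XH n : MvPolynomial (ZVar n) ℂ) ≠ 0 := by
  rw [XH]; exact MvPolynomial.X_ne_zero _

lemma LH_not_dvd_den (r : Bool × Bool) {x y : Fin n} (σf : Fin n → Fin n)
    {w : Fin k → Fin n} (hw : Function.Injective w)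
    (h00 : r = (false, false) → ∀ p ∈ KP k, ¬ LH x y ∣ LH (w p.1) (w p.2))
    (hM : r.2 = true → ∀ p : Fin k × Fin n, ¬ LH x y ∣ LH (w p.1) (σf p.2)) :
    ¬ LH x y ∣ denPoly r σf w := by
  have hq := prime_LH x y
  intro hd
  rw [denPoly] at hd
  rcases hq.dvd_mul.mp hd with hd | hd
  · rcases hq.dvd_mul.mp hd with hd | hd
    · refine not_dvd_prod hq (fun p hp => ?_) hd
      exact LH_not_dvd_LZ x y (fun h => absurd (hw h) (ne_of_gt (mem_KP.mp hp)))
    · revert hd; split_ifs with h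
      · exact fun hd => not_dvd_prod hq (h00 h) hd
      · exact fun hd => hq.not_unit (isUnit_of_dvd_one hd)
  · revert hd; split_ifs with h
    · exact fun hd => not_dvd_prod hq (fun p _ => hM h p) hd
    · exact fun hd => hq.not_unit (isUnit_of_dvd_one hd)

lemma LZ_not_dvd_den (r : Bool × Bool) {x y : Fin n} (hxy : x ≠ y) (σf : Fin n → Fin n)
    {w : Fin k → Fin n}
    (hZ : ∀ p ∈ KP k, ¬ LZ x y ∣ LZ (w p.2) (w p.1)) :
    ¬ LZ x y ∣ denPoly r σf w := by
  have hq := prime_LZ hxy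
  intro hd
  rw [denPoly] at hd
  rcases hq.dvd_mul.mp hd with hd | hd
  · rcases hq.dvd_mul.mp hd with hd | hd
    · exact not_dvd_prod hq hZ hd
    · revert hd; split_ifs with h
      · exact fun hd => not_dvd_prod hq (fun p _ => LZ_not_dvd_LH hxy _ _) hd
      · exact fun hd => hq.not_unit (isUnit_of_dvd_one hd)
  · revert hd; split_ifs with h
    · exact fun hd => not_dvd_prod hq (fun p _ => LZ_not_dvd_LH hxy _ _) hd
    · exact fun hd => hq.not_unit (isUnit_of_dvd_one hd)

def termF (r : Bool × Bool) (idx : Fin k → Fin n) (σf : Fin n → Fin n)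
    (w : Fin k → Fin n) : ZField n :=
  ιF (numPoly r idx σf w) * (ιF (denPoly r σf w))⁻¹

lemma noPole_LH_term (r : Bool × Bool) (idx : Fin k → Fin n) (hmono : StrictMono idx)
    (σ : Equiv.Perm (Fin n)) {w : Fin k → Fin n} (hw : Function.Injective w)
    (x y : Fin n) : NoPole (LH x y) (termF r idx (⇑σ) w) := by
  have hq := prime_LH x y
  rw [termF]
  rcases hr2 : r.2 with _ | _
  · -- r.2 = false
    by_cases hr : r = (false, false)
    · subst hr
      by_cases hex : ∃ p₀ ∈ KP k, w p₀.1 = x ∧ w p₀.2 = y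
      · obtain ⟨p₀, hp₀, hx₀, hy₀⟩ := hex
        have hxy : x ≠ y := by
          intro h
          exact absurd (hw (by rw [hx₀, hy₀, h])) (ne_of_lt (mem_KP.mp hp₀))
        have hD : denPoly (false, false) (⇑σ) w = LH x y *
            ((∏ p ∈ KP k, LZ (w p.2) (w p.1)) *
              ∏ p ∈ (KP k).erase p₀, LH (w p.1) (w p.2)) := by
          rw [denPoly_split00 (⇑σ) w hp₀, hx₀, hy₀]
        have hm : ¬ LH x y ∣ ((∏ p ∈ KP k, LZ (w p.2) (w p.1)) *
            ∏ p ∈ (KP k).erase p₀, LH (w p.1) (w p.2)) := by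
          intro hd
          rcases hq.dvd_mul.mp hd with hd | hd
          · refine not_dvd_prod hq (fun p hp => ?_) hd
            exact LH_not_dvd_LZ x y (fun h => absurd (hw h) (ne_of_gt (mem_KP.mp hp)))
          · refine not_dvd_prod hq (fun p hp => ?_) hd
            refine LH_not_dvd_LH hxy (fun hc => ?_)
            have h1 : p.1 = p₀.1 := hw (hc.1.trans hx₀.symm)
            have h2 : p.2 = p₀.2 := hw (hc.2.trans hy₀.symm)
            exact absurd (Prod.ext h1 h2) (Finset.ne_of_mem_erase hp)
        have hNdvd : LH x y ∣ numPoly (false, false) idx (⇑σ) w := by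
          by_cases hcase : σ.symm x < idx p₀.2
          · refine dvd_num_inner1 (false, false) idx (⇑σ) w (a := p₀.2) (b := σ.symm x)
              hcase ?_
            simp only [fB, Bool.false_eq_true, if_false]
            rw [Equiv.apply_symm_apply, hy₀]
          · have hlt : idx p₀.1 < σ.symm x :=
              lt_of_lt_of_le (hmono (mem_KP.mp hp₀)) (not_lt.mp hcase)
            have h0 : numPoly (false, false) idx (⇑σ) w = 0 :=
              num_zero_inner2 (false, false) idx (⇑σ) w hlt
                (by rw [Equiv.apply_symm_apply, hx₀])
            rw [h0]; exact dvd_zero _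
        obtain ⟨N₁, hN₁⟩ := hNdvd
        exact NoPole.of_rep_cancel hD (LH_ne x y) hm hN₁
      · push_neg at hex
        refine NoPole.of_rep (LH_not_dvd_den (false, false) (⇑σ) hw
          (fun _ p hp => ?_) (fun ht => absurd ht (by simp)))
        by_cases hxy : x = y
        · exact hxy ▸ XH_not_dvd_LH x (fun h => absurd (hw h) (ne_of_lt (mem_KP.mp hp)))
        · exact LH_not_dvd_LH hxy (fun hc => hex p hp hc.1 hc.2)
    · refine NoPole.of_rep (LH_not_dvd_den r (⇑σ) hw
        (fun hff => absurd hff hr) (fun ht => absurd ht (by rw [hr2]; simp)))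
  · -- r.2 = true
    by_cases hxy : x = y
    · -- the prime is XH
      subst hxy
      rw [LH_self]
      have hD := denPoly_splitH r σ w hr2
      have hN := numPoly_H r idx (⇑σ) w hr2
      refine NoPole.of_rep_cancel hD (pow_ne_zero k XH_ne) ?_ hN
      rw [← LH_self x]
      intro hd
      rcases (prime_LH x x).dvd_mul.mp hd with hd | hd
      · refine not_dvd_prod (prime_LH x x) (fun p hp => ?_) hd
        exact LH_not_dvd_LZ x x (fun h => absurd (hw h) (ne_of_gt (mem_KP.mp hp)))
      · refine not_dvd_prod (prime_LH x x) (fun p hp => ?_) hd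
        simp only [Finset.mem_filter] at hp
        exact XH_not_dvd_LH x (fun h => hp.2 h.symm)
    · -- x ≠ y
      by_cases hex : ∃ a₀, w a₀ = x
      · obtain ⟨a₀, ha₀⟩ := hex
        have hD : denPoly r (⇑σ) w = LH x y *
            ((∏ p ∈ KP k, LZ (w p.2) (w p.1)) *
             ∏ p ∈ (univ : Finset (Fin k × Fin n)).erase (a₀, σ.symm y),
               LH (w p.1) (σ p.2)) := by
          rw [denPoly_splitM r (⇑σ) w hr2 (a₀, σ.symm y)]
          have heq : LH (w (a₀, σ.symm y).1) (σ (a₀, σ.symm y).2) = LH x y := by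
            show LH (w a₀) (σ (σ.symm y)) = LH x y
            rw [ha₀, Equiv.apply_symm_apply]
          rw [heq]
        have hm : ¬ LH x y ∣ ((∏ p ∈ KP k, LZ (w p.2) (w p.1)) *
            ∏ p ∈ (univ : Finset (Fin k × Fin n)).erase (a₀, σ.symm y),
              LH (w p.1) (σ p.2)) := by
          intro hd
          rcases hq.dvd_mul.mp hd with hd | hd
          · refine not_dvd_prod hq (fun p hp => ?_) hd
            exact LH_not_dvd_LZ x y (fun h => absurd (hw h) (ne_of_gt (mem_KP.mp hp)))
          · refine not_dvd_prod hq (fun p hp => ?_) hd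
            refine LH_not_dvd_LH hxy (fun hc => ?_)
            have h1 : p.1 = a₀ := hw (hc.1.trans ha₀.symm)
            have h2 : p.2 = σ.symm y := by
              rw [← hc.2, Equiv.symm_apply_apply]
            exact absurd (Prod.ext h1 h2) (Finset.ne_of_mem_erase hp)
        have hNdvd : LH x y ∣ numPoly r idx (⇑σ) w := by
          by_cases hc1 : idx a₀ < σ.symm x
          · have h0 : numPoly r idx (⇑σ) w = 0 :=
              num_zero_inner2 r idx (⇑σ) w hc1 (by rw [Equiv.apply_symm_apply, ha₀])
            rw [h0]; exact dvd_zero _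
          · rcases lt_trichotomy (σ.symm x) (σ.symm y) with hlt | heq | hgt
            · refine dvd_num_NP r idx (⇑σ) w hr2 (p := (σ.symm x, σ.symm y)) hlt ?_
              simp only [Equiv.apply_symm_apply]
            · exact absurd (σ.symm.injective heq) hxy
            · have hby : σ.symm y < idx a₀ := lt_of_lt_of_le hgt (not_lt.mp hc1)
              refine dvd_num_inner1 r idx (⇑σ) w (a := a₀) (b := σ.symm y) hby ?_
              simp only [fB, hr2, if_true]
              rw [Equiv.apply_symm_apply, ha₀]
        obtain ⟨N₁, hN₁⟩ := hNdvd
        exact NoPole.of_rep_cancel hD (LH_ne x y) hm hN₁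
      · push_neg at hex
        refine NoPole.of_rep (LH_not_dvd_den r (⇑σ) hw
          (fun hff => absurd hff (by rintro rfl; simp at hr2)) (fun _ p => ?_))
        exact LH_not_dvd_LH hxy (fun hc => hex p.1 hc.1)



variable {n k : ℕ}

local notation "ιF" => algebraMap (MvPolynomial (ZVar n) ℂ) (ZField n)

lemma pair_eq {F : Type*} [Field F] (Q M M' A A' C : F) (hQ : Q ≠ 0) (hM : M ≠ 0)
    (hM' : M' ≠ 0) (h : Q * C = A' * M - A * M') :
    (A * (-Q * M)⁻¹ + A' * (Q * M')⁻¹) * (M * M') = C := by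
  have h1 : A * (-Q * M)⁻¹ + A' * (Q * M')⁻¹ = (A' * M - A * M') / (Q * (M * M')) := by
    field_simp
    ring
  rw [h1, ← h]
  field_simp

lemma pair_eq_sub {F : Type*} [Field F] (A A' D D' C : F) (hD : D ≠ 0) (hD' : D' ≠ 0)
    (h : A * D' - A' * D = C) : (A * D⁻¹ - A' * D'⁻¹) * (D * D') = C := by
  rw [← h]
  field_simp

lemma sum_pair_split {M : Type*} [AddCommMonoid M] {G : Type*} [Fintype G] [DecidableEq G]
    (f : G → M) (ν : G → G) (hinv : ∀ g, ν (ν g) = g)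
    (pred : G → Prop) [DecidablePred pred] (hflip : ∀ g, pred (ν g) ↔ ¬ pred g) :
    ∑ g, f g = ∑ g ∈ univ.filter pred, (f g + f (ν g)) := by
  have h2 : ∑ g ∈ univ.filter (fun g => ¬ pred g), f g
      = ∑ g ∈ univ.filter pred, f (ν g) := by
    refine Finset.sum_nbij' (i := ν) (j := ν) ?_ ?_ ?_ ?_ ?_
    · intro a ha
      simp only [Finset.mem_filter, mem_univ, true_and] at ha ⊢
      exact (hflip a).mpr ha
    · intro a ha
      simp only [Finset.mem_filter, mem_univ, true_and] at ha ⊢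
      have hp : pred (ν (ν a)) := by rw [hinv]; exact ha
      exact (hflip (ν a)).mp hp
    · intro a _; exact hinv a
    · intro a _; exact hinv a
    · intro a _; rw [hinv]
  rw [Finset.sum_add_distrib, ← Finset.sum_filter_add_sum_filter_not univ pred f, h2]

lemma EZ_swap_apply (x y c : Fin n) :
    EZ x y (XZ (Equiv.swap x y c)) = EZ x y (XZ c) := by
  rcases eq_or_ne c x with rfl | hcx
  · rw [Equiv.swap_apply_left, EZ_XZ, EZ_XZ, if_pos rfl]
    split_ifs with h
    · rw [h]
    · rfl
  · rcases eq_or_ne c y with rfl | hcy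
    · rw [Equiv.swap_apply_right, EZ_XZ, EZ_XZ, if_pos rfl, if_neg hcx]
    · rw [Equiv.swap_apply_of_ne_of_ne hcx hcy]

lemma LZ_swap (x y : Fin n) : LZ y x = -LZ x y := by rw [LZ, LZ]; ring

lemma noPole_LZ_sum (r : Bool × Bool) (idx : Fin k → Fin n) (σ : Equiv.Perm (Fin n))
    (u : Fin k → Fin n) (hu : Function.Injective u) {x y : Fin n} (hxy : x ≠ y) :
    NoPole (LZ x y) (∑ τ : Equiv.Perm (Fin k), termF r idx (⇑σ) (fun a => u (τ a))) := by
  have hq := prime_LZ hxy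
  by_cases hex : (∃ ax, u ax = x) ∧ (∃ ay, u ay = y)
  case neg =>
    refine NoPole.sum hq (fun τ _ => ?_)
    refine NoPole.of_rep (LZ_not_dvd_den r hxy (⇑σ) (fun p hp => ?_))
    have hne : u (τ p.2) ≠ u (τ p.1) := fun h =>
      absurd (τ.injective (hu h)) (ne_of_gt (mem_KP.mp hp))
    refine LZ_not_dvd_LZ hxy hne ?_ ?_
    · rintro ⟨h1, h2⟩; exact hex ⟨⟨τ p.2, h1⟩, ⟨τ p.1, h2⟩⟩
    · rintro ⟨h1, h2⟩; exact hex ⟨⟨τ p.1, h2⟩, ⟨τ p.2, h1⟩⟩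
  case pos =>
    obtain ⟨⟨ax, hax⟩, ⟨ay, hay⟩⟩ := hex
    have haxy : ax ≠ ay := fun h => hxy (by rw [← hax, ← hay, h])
    have hswu : ∀ c, u (Equiv.swap ax ay c) = Equiv.swap x y (u c) := by
      intro c
      rcases eq_or_ne c ax with rfl | h1
      · rw [Equiv.swap_apply_left, hay, hax, Equiv.swap_apply_left]
      · rcases eq_or_ne c ay with rfl | h2
        · rw [Equiv.swap_apply_right, hax, hay, Equiv.swap_apply_right]
        · rw [Equiv.swap_apply_of_ne_of_ne h1 h2,
            Equiv.swap_apply_of_ne_of_ne (fun h => h1 (hu (h.trans hax.symm)))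
              (fun h => h2 (hu (h.trans hay.symm)))]
    set ν : Equiv.Perm (Fin k) → Equiv.Perm (Fin k) := fun τ => (Equiv.swap ax ay) * τ
      with hν
    have hνinv : ∀ τ, ν (ν τ) = τ := by
      intro τ
      rw [hν]
      simp only [← mul_assoc, Equiv.swap_mul_self, one_mul]
    have hflip : ∀ τ : Equiv.Perm (Fin k),
        ((ν τ).symm ax < (ν τ).symm ay) ↔ ¬ (τ.symm ax < τ.symm ay) := by
      intro τ
      have e1 : (ν τ).symm ax = τ.symm ay := by
        have h0 : (ν τ) (τ.symm ay) = ax := by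
          rw [hν]
          show (Equiv.swap ax ay) (τ (τ.symm ay)) = ax
          rw [Equiv.apply_symm_apply, Equiv.swap_apply_right]
        rw [← h0, Equiv.symm_apply_apply]
      have e2 : (ν τ).symm ay = τ.symm ax := by
        have h0 : (ν τ) (τ.symm ax) = ay := by
          rw [hν]
          show (Equiv.swap ax ay) (τ (τ.symm ax)) = ay
          rw [Equiv.apply_symm_apply, Equiv.swap_apply_left]
        rw [← h0, Equiv.symm_apply_apply]
      rw [e1, e2]
      constructor
      · intro h hlt; exact absurd (h.trans hlt) (lt_irrefl _)
      · intro h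
        rcases (not_lt.mp h).lt_or_eq with h' | h'
        · exact h'
        · exact absurd (τ.symm.injective h').symm haxy
    rw [sum_pair_split (fun τ => termF r idx (⇑σ) (fun a => u (τ a))) ν hνinv
      (fun τ => τ.symm ax < τ.symm ay) hflip]
    refine NoPole.sum hq (fun τ hτ => ?_)
    simp only [Finset.mem_filter, mem_univ, true_and] at hτ
    set w : Fin k → Fin n := fun a => u (τ a) with hwdef
    have hw : Function.Injective w := fun a b h => τ.injective (hu h)
    set A₀ := τ.symm ax with hA₀
    set B₀ := τ.symm ay with hB₀
    have hp₀ : (A₀, B₀) ∈ KP k := mem_KP.mpr hτ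
    have hwA : w A₀ = x := by rw [hwdef]; simp [hA₀, hax]
    have hwB : w B₀ = y := by rw [hwdef]; simp [hB₀, hay]
    have hνw : (fun a => u ((ν τ) a)) = fun a => Equiv.swap x y (w a) := by
      funext a
      rw [hν]
      show u ((Equiv.swap ax ay) (τ a)) = _
      rw [hswu]
    rw [hνw]
    set w' : Fin k → Fin n := fun a => Equiv.swap x y (w a) with hw'def
    have hw' : Function.Injective w' := fun a b h =>
      hw ((Equiv.swap x y).injective h)
    have hw'A : w' A₀ = y := by rw [hw'def]; simp only [hwA, Equiv.swap_apply_left]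
    have hw'B : w' B₀ = x := by rw [hw'def]; simp only [hwB, Equiv.swap_apply_right]
    -- denominator splittings
    set m : MvPolynomial (ZVar n) ℂ :=
      (∏ p ∈ (KP k).erase (A₀, B₀), LZ (w p.2) (w p.1)) *
      (if r = (false, false) then ∏ p ∈ KP k, LH (w p.1) (w p.2) else 1) *
      (if r.2 then ∏ p ∈ (univ : Finset (Fin k × Fin n)), LH (w p.1) (σ p.2) else 1)
      with hm
    set m' : MvPolynomial (ZVar n) ℂ :=
      (∏ p ∈ (KP k).erase (A₀, B₀), LZ (w' p.2) (w' p.1)) *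
      (if r = (false, false) then ∏ p ∈ KP k, LH (w' p.1) (w' p.2) else 1) *
      (if r.2 then ∏ p ∈ (univ : Finset (Fin k × Fin n)), LH (w' p.1) (σ p.2) else 1)
      with hm'
    have hD : denPoly r (⇑σ) w = -LZ x y * m := by
      rw [denPoly_split r (⇑σ) w hp₀, hm]
      show LZ (w B₀) (w A₀) * _ = _
      rw [hwA, hwB, LZ_swap]
    have hD' : denPoly r (⇑σ) w' = LZ x y * m' := by
      rw [denPoly_split r (⇑σ) w' hp₀, hm']
      show LZ (w' B₀) (w' A₀) * _ = _
      rw [hw'A, hw'B]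
    -- non-divisibility of complements
    have hclose : ∀ (v : Fin k → Fin n), Function.Injective v → v A₀ ∈ ({x, y} : Set (Fin n)) →
        v B₀ ∈ ({x, y} : Set (Fin n)) → v A₀ ≠ v B₀ →
        ¬ LZ x y ∣ ((∏ p ∈ (KP k).erase (A₀, B₀), LZ (v p.2) (v p.1)) *
          (if r = (false, false) then ∏ p ∈ KP k, LH (v p.1) (v p.2) else 1) *
          (if r.2 then ∏ p ∈ (univ : Finset (Fin k × Fin n)), LH (v p.1) (σ p.2) else 1)) := by
      intro v hv hvA hvB hvAB
      intro hd
      rcases hq.dvd_mul.mp hd with hd | hd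
      rcases hq.dvd_mul.mp hd with hd | hd
      · refine not_dvd_prod hq (fun p hp => ?_) hd
        have hpKP := Finset.mem_of_mem_erase hp
        have hne : v p.2 ≠ v p.1 := fun h =>
          absurd (hv h) (ne_of_gt (mem_KP.mp hpKP))
        refine LZ_not_dvd_LZ hxy hne ?_ ?_
        · rintro ⟨h1, h2⟩
          -- v p.2 = x, v p.1 = y  : then {p.1,p.2} = {A₀,B₀}
          have e2 : p.2 = A₀ ∨ p.2 = B₀ := by
            rcases hvA with hA | hA
            · exact Or.inl (hv (h1.trans hA.symm))
            · rcases hvB with hB | hB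
              · exact Or.inr (hv (h1.trans hB.symm))
              · exact absurd (hA.symm ▸ hB.symm ▸ rfl : v A₀ = v B₀) hvAB
          have e1 : p.1 = A₀ ∨ p.1 = B₀ := by
            rcases hvA with hA | hA
            · rcases hvB with hB | hB
              · exact absurd (hA.symm ▸ hB.symm ▸ rfl : v A₀ = v B₀) hvAB
              · exact Or.inr (hv (h2.trans hB.symm))
            · exact Or.inl (hv (h2.trans hA.symm))
          have hplt := mem_KP.mp hpKP
          have hne' := Finset.ne_of_mem_erase hp
          rcases e1 with e1 | e1 <;> rcases e2 with e2 | e2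
          · exact absurd (e1 ▸ e2 ▸ rfl : p.1 = p.2) (ne_of_lt hplt)
          · exact hne' (Prod.ext e1 e2)
          · exact absurd (e2 ▸ e1 ▸ hplt) (not_lt.mpr (le_of_lt hτ))
          · exact absurd (e1 ▸ e2 ▸ rfl : p.1 = p.2) (ne_of_lt hplt)
        · rintro ⟨h1, h2⟩
          have e2 : p.2 = A₀ ∨ p.2 = B₀ := by
            rcases hvA with hA | hA
            · rcases hvB with hB | hB
              · exact absurd (hA.symm ▸ hB.symm ▸ rfl : v A₀ = v B₀) hvAB
              · exact Or.inr (hv (h1.trans hB.symm))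
            · exact Or.inl (hv (h1.trans hA.symm))
          have e1 : p.1 = A₀ ∨ p.1 = B₀ := by
            rcases hvA with hA | hA
            · exact Or.inl (hv (h2.trans hA.symm))
            · rcases hvB with hB | hB
              · exact Or.inr (hv (h2.trans hB.symm))
              · exact absurd (hA.symm ▸ hB.symm ▸ rfl : v A₀ = v B₀) hvAB
          have hplt := mem_KP.mp hpKP
          have hne' := Finset.ne_of_mem_erase hp
          rcases e1 with e1 | e1 <;> rcases e2 with e2 | e2
          · exact absurd (e1 ▸ e2 ▸ rfl : p.1 = p.2) (ne_of_lt hplt)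
          · exact hne' (Prod.ext e1 e2)
          · exact absurd (e2 ▸ e1 ▸ hplt) (not_lt.mpr (le_of_lt hτ))
          · exact absurd (e1 ▸ e2 ▸ rfl : p.1 = p.2) (ne_of_lt hplt)
      · revert hd; split_ifs with h
        · exact fun hd => not_dvd_prod hq (fun p _ => LZ_not_dvd_LH hxy _ _) hd
        · exact fun hd => hq.not_unit (isUnit_of_dvd_one hd)
      · revert hd; split_ifs with h
        · exact fun hd => not_dvd_prod hq (fun p _ => LZ_not_dvd_LH hxy _ _) hd
        · exact fun hd => hq.not_unit (isUnit_of_dvd_one hd)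
    have hqm : ¬ LZ x y ∣ m :=
      hclose w hw (by rw [hwA]; exact Set.mem_insert _ _)
        (by rw [hwB]; exact Set.mem_insert_of_mem _ rfl)
        (by rw [hwA, hwB]; exact hxy)
    have hqm' : ¬ LZ x y ∣ m' :=
      hclose w' hw' (by rw [hw'A]; exact Set.mem_insert_of_mem _ rfl)
        (by rw [hw'B]; exact Set.mem_insert _ _)
        (by rw [hw'A, hw'B]; exact hxy.symm)
    clear_value m m'
    -- E-relations
    have hE := EZ_swap_apply x y
    have hEN : EZ x y (numPoly r idx (⇑σ) w') = EZ x y (numPoly r idx (⇑σ) w) :=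
      E_swap_num (EZ x y) (⇑(Equiv.swap x y)) hE r idx (⇑σ) w
    have hEm : EZ x y m' = EZ x y m := by
      obtain ⟨eLZ, eLH1, _, eLHb⟩ := E_swap_XZ hE
      rw [hm, hm']
      simp only [map_mul]
      refine congrArg₂ (· * ·) (congrArg₂ (· * ·) ?_ ?_) ?_
      · rw [map_prod, map_prod]
        exact Finset.prod_congr rfl fun p _ => eLZ _ _
      · split_ifs with h
        · rw [map_prod, map_prod]
          exact Finset.prod_congr rfl fun p _ => eLHb _ _
        · rfl
      · split_ifs with h
        · rw [map_prod, map_prod]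
          exact Finset.prod_congr rfl fun p _ => eLH1 _ _
        · rfl
    have hnum : LZ x y ∣ (numPoly r idx (⇑σ) w' * m - numPoly r idx (⇑σ) w * m') := by
      rw [LZ_dvd_iff hxy]
      rw [map_sub, map_mul, map_mul, hEN, hEm]
      ring
    obtain ⟨c, hc⟩ := hnum
    refine ⟨c, m * m', fun hd => ?_, ?_⟩
    · rcases hq.dvd_mul.mp hd with hd | hd
      exacts [hqm hd, hqm' hd]
    · rw [termF, termF, hD, hD']
      rw [map_mul, map_mul, map_neg, map_mul]
      refine pair_eq _ _ _ _ _ _ (iota_ne (LZ_ne hxy))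
        (iota_ne (fun h0 => hqm (by rw [h0]; exact dvd_zero _)))
        (iota_ne (fun h0 => hqm' (by rw [h0]; exact dvd_zero _))) ?_
      rw [← map_mul, ← map_mul, ← map_mul, ← hc, map_sub, map_mul, map_mul]

def GoodDiv (q : MvPolynomial (ZVar n) ℂ) (x : ZField n) : Prop :=
  ∃ a b : MvPolynomial (ZVar n) ℂ, ¬ q ∣ b ∧ x * ιF b = ιF (q * a)

lemma GoodDiv.zero {q : MvPolynomial (ZVar n) ℂ} (hq : Prime q) : GoodDiv q 0 :=
  ⟨0, 1, fun h => hq.not_unit (isUnit_of_dvd_one h), by simp⟩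

lemma GoodDiv.add {q : MvPolynomial (ZVar n) ℂ} (hq : Prime q) {x y : ZField n}
    (hx : GoodDiv q x) (hy : GoodDiv q y) : GoodDiv q (x + y) := by
  obtain ⟨a, b, hb, hab⟩ := hx
  obtain ⟨c, d, hd, hcd⟩ := hy
  refine ⟨a * d + c * b, b * d, fun h => ?_, ?_⟩
  · rcases hq.dvd_mul.mp h with h | h
    exacts [hb h, hd h]
  · rw [map_mul, add_mul]
    calc x * (ιF b * ιF d) + y * (ιF b * ιF d)
        = (x * ιF b) * ιF d + (y * ιF d) * ιF b := by ring
      _ = ιF (q * a) * ιF d + ιF (q * c) * ιF b := by rw [hab, hcd]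
      _ = ιF (q * (a * d + c * b)) := by rw [← map_mul, ← map_mul, ← map_add]; ring_nf
    
lemma GoodDiv.sum {q : MvPolynomial (ZVar n) ℂ} (hq : Prime q) {α : Type*}
    {s : Finset α} {f : α → ZField n} (h : ∀ a ∈ s, GoodDiv q (f a)) :
    GoodDiv q (∑ a ∈ s, f a) :=
  Finset.sum_induction f (GoodDiv q) (fun _ _ => GoodDiv.add hq) (GoodDiv.zero hq) h

lemma goodDiv_pair (r : Bool × Bool) (idx : Fin k → Fin n) (σ : Equiv.Perm (Fin n))
    {w : Fin k → Fin n} (hw : Function.Injective w) {i j : Fin n} (hij : i ≠ j)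
    (hwj : ∀ a, w a ≠ j) :
    GoodDiv (LZ i j)
      (termF r idx (⇑σ) w - termF r idx (⇑σ) (fun a => Equiv.swap i j (w a))) := by
  have hq := prime_LZ hij
  set w' : Fin k → Fin n := fun a => Equiv.swap i j (w a) with hw'def
  have hw' : Function.Injective w' := fun a b h => hw ((Equiv.swap i j).injective h)
  have hw'i : ∀ a, w' a ≠ i := by
    intro a h
    rw [hw'def] at h
    have := (Equiv.swap i j).injective (h.trans (Equiv.swap_apply_right i j).symm)
    exact hwj a this
  have hndD : ¬ LZ i j ∣ denPoly r (⇑σ) w := by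
    refine LZ_not_dvd_den r hij (⇑σ) (fun p hp => ?_)
    have hne : w p.2 ≠ w p.1 := fun h => absurd (hw h) (ne_of_gt (mem_KP.mp hp))
    refine LZ_not_dvd_LZ hij hne ?_ ?_
    · rintro ⟨h1, h2⟩; exact hwj p.1 h2
    · rintro ⟨h1, h2⟩; exact hwj p.2 h1
  have hndD' : ¬ LZ i j ∣ denPoly r (⇑σ) w' := by
    refine LZ_not_dvd_den r hij (⇑σ) (fun p hp => ?_)
    have hne : w' p.2 ≠ w' p.1 := fun h => absurd (hw' h) (ne_of_gt (mem_KP.mp hp))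
    refine LZ_not_dvd_LZ hij hne ?_ ?_
    · rintro ⟨h1, h2⟩; exact hw'i p.2 h1
    · rintro ⟨h1, h2⟩; exact hw'i p.1 h2
  have hE := EZ_swap_apply i j
  have hEN : EZ i j (numPoly r idx (⇑σ) w') = EZ i j (numPoly r idx (⇑σ) w) :=
    E_swap_num (EZ i j) (⇑(Equiv.swap i j)) hE r idx (⇑σ) w
  have hED : EZ i j (denPoly r (⇑σ) w') = EZ i j (denPoly r (⇑σ) w) :=
    E_swap_den (EZ i j) (⇑(Equiv.swap i j)) hE r (⇑σ) w
  have hnum : LZ i j ∣ (numPoly r idx (⇑σ) w * denPoly r (⇑σ) w' -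
      numPoly r idx (⇑σ) w' * denPoly r (⇑σ) w) := by
    rw [LZ_dvd_iff hij]
    rw [map_sub, map_mul, map_mul, hEN, hED]
    ring
  obtain ⟨c, hc⟩ := hnum
  refine ⟨c, denPoly r (⇑σ) w * denPoly r (⇑σ) w', fun hd => ?_, ?_⟩
  · rcases hq.dvd_mul.mp hd with hd | hd
    exacts [hndD hd, hndD' hd]
  · rw [termF, termF]
    rw [map_mul]
    refine pair_eq_sub _ _ _ _ _ (iota_ne (denPoly_ne r (⇑σ) hw))
      (iota_ne (denPoly_ne r (⇑σ) hw')) ?_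
    rw [← map_mul, ← map_mul, ← map_sub, hc]

lemma goodDiv_diff (r : Bool × Bool) (idx : Fin k → Fin n) (σ : Equiv.Perm (Fin n))
    (u v : Fin k → Fin n) (hu : Function.Injective u)
    {i j : Fin n} (hij : i ≠ j) (huj : ∀ a, u a ≠ j)
    (π : Equiv.Perm (Fin k)) (hπ : ∀ a, v (π a) = Equiv.swap i j (u a)) :
    GoodDiv (LZ i j)
      ((∑ τ : Equiv.Perm (Fin k), termF r idx (⇑σ) (fun a => u (τ a))) -
       ∑ τ : Equiv.Perm (Fin k), termF r idx (⇑σ) (fun a => v (τ a))) := by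
  have hreindex : (∑ τ : Equiv.Perm (Fin k), termF r idx (⇑σ) (fun a => v (τ a)))
      = ∑ τ : Equiv.Perm (Fin k), termF r idx (⇑σ) (fun a => Equiv.swap i j (u (τ a))) := by
    rw [← Equiv.sum_comp (Equiv.mulLeft π)
      (fun τ : Equiv.Perm (Fin k) => termF r idx (⇑σ) (fun a => v (τ a)))]
    refine Finset.sum_congr rfl fun τ _ => ?_
    have hfn : (fun a => v ((Equiv.mulLeft π τ) a)) = fun a => Equiv.swap i j (u (τ a)) :=
      funext fun a => by
        show v ((π * τ) a) = _
        rw [Equiv.Perm.mul_apply, hπ]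
    show termF r idx (⇑σ) (fun a => v ((Equiv.mulLeft π τ) a)) = _
    rw [hfn]
  rw [hreindex, ← Finset.sum_sub_distrib]
  refine GoodDiv.sum (prime_LZ hij) (fun τ _ => ?_)
  exact goodDiv_pair r idx σ (fun a b h => τ.injective (hu h)) hij (fun a => huj (τ a))



end MainLemmas


section Assembly
variable {n k : ℕ}

local notation "ιF" => algebraMap (MvPolynomial (ZVar n) ℂ) (ZField n)

lemma NoPole.neg {q : MvPolynomial (ZVar n) ℂ} {x : ZField n} (hx : NoPole q x) :
    NoPole q (-x) := by
  obtain ⟨a, b, hb, hab⟩ := hx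
  exact ⟨-a, b, hb, by rw [map_neg, ← hab]; ring⟩

lemma NoPole.sub {q : MvPolynomial (ZVar n) ℂ} (hq : Prime q) {x y : ZField n}
    (hx : NoPole q x) (hy : NoPole q y) : NoPole q (x - y) := by
  rw [sub_eq_add_neg]
  exact hx.add hq hy.neg

lemma setIdx_strictMono {I : Finset (Fin n)} (hI : I.card = k) :
    StrictMono (setIdx I hI) := fun a b h => by
  have h2 : I.orderIsoOfFin hI a < I.orderIsoOfFin hI b := (I.orderIsoOfFin hI).lt_iff_lt.mpr h
  exact h2

lemma setIdx_inj {I : Finset (Fin n)} (hI : I.card = k) :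
    Function.Injective (setIdx I hI) := (setIdx_strictMono hI).injective

lemma setIdx_mem {I : Finset (Fin n)} (hI : I.card = k) (a : Fin k) :
    setIdx I hI a ∈ I := (I.orderIsoOfFin hI a).2

lemma termF_mul (r : Bool × Bool) (idx : Fin k → Fin n) (σf : Fin n → Fin n)
    {w : Fin k → Fin n} (hw : Function.Injective w)
    (rest B : MvPolynomial (ZVar n) ℂ) (hB : B = denPoly r σf w * rest) :
    termF r idx σf w * ιF B = ιF (numPoly r idx σf w * rest) := by
  rw [termF, hB, map_mul, map_mul]
  have hD := iota_ne (denPoly_ne r σf hw)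
  field_simp

lemma den_factor_cases (r : Bool × Bool) {q : MvPolynomial (ZVar n) ℂ} (hq : Prime q)
    (σf : Fin n → Fin n) (w : Fin k → Fin n)
    (hd : q ∣ denPoly r σf w) :
    (∃ p ∈ KP k, q ∣ LZ (w p.2) (w p.1)) ∨ (∃ p ∈ KP k, q ∣ LH (w p.1) (w p.2)) ∨
    (∃ p : Fin k × Fin n, q ∣ LH (w p.1) (σf p.2)) := by
  rw [denPoly] at hd
  rcases hq.dvd_mul.mp hd with hd | hd
  · rcases hq.dvd_mul.mp hd with hd | hd
    · exact Or.inl (hq.exists_mem_finset_dvd hd)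
    · refine Or.inr (Or.inl ?_)
      revert hd; split_ifs with h
      · exact fun hd => hq.exists_mem_finset_dvd hd
      · exact fun hd => absurd (isUnit_of_dvd_one hd) hq.not_unit
  · refine Or.inr (Or.inr ?_)
    revert hd; split_ifs with h
    · intro hd
      obtain ⟨p, _, hp⟩ := hq.exists_mem_finset_dvd hd
      exact ⟨p, hp⟩
    · exact fun hd => absurd (isUnit_of_dvd_one hd) hq.not_unit

end Assembly


section Final
variable {n k : ℕ}

local notation "ιF" => algebraMap (MvPolynomial (ZVar n) ℂ) (ZField n)

lemma gkm_main (r : Bool × Bool)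
    (σ : Equiv.Perm (Fin n)) (J : Finset (Fin n)) (hJ : J.card = k)
    (K : Finset (Fin n)) (i j : Fin n) (hij : i ≠ j)
    (hiK : i ∉ K) (hjK : j ∉ K)
    (hU : (insert i K).card = k) (hV : (insert j K).card = k) :
    ∃ p : MvPolynomial (ZVar n) ℂ,
      weightWSub r σ J hJ (insert i K) hU - weightWSub r σ J hJ (insert j K) hV =
        algebraMap (MvPolynomial (ZVar n) ℂ) (ZField n)
          ((MvPolynomial.X (Sum.inl i) - MvPolynomial.X (Sum.inl j)) * p) := by
  have hJm : (J.map σ.symm.toEmbedding).card = k := by rw [Finset.card_map]; exact hJ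
  set idxJ : Fin k → Fin n := setIdx (J.map σ.symm.toEmbedding) hJm with hidxJ
  have hmono : StrictMono idxJ := setIdx_strictMono hJm
  set u : Fin k → Fin n := setIdx (insert i K) hU with hu_def
  set v : Fin k → Fin n := setIdx (insert j K) hV with hv_def
  have hu : Function.Injective u := setIdx_inj hU
  have hv : Function.Injective v := setIdx_inj hV
  have humem : ∀ a, u a ∈ insert i K := fun a => setIdx_mem hU a
  have hvmem : ∀ a, v a ∈ insert j K := fun a => setIdx_mem hV a
  have huj : ∀ a, u a ≠ j := by
    intro a h
    have hm := humem a
    rw [h] at hm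
    rcases Finset.mem_insert.mp hm with h' | h'
    exacts [hij h'.symm, hjK h']
  have hvi : ∀ a, v a ≠ i := by
    intro a h
    have hm := hvmem a
    rw [h] at hm
    rcases Finset.mem_insert.mp hm with h' | h'
    exacts [hij h', hiK h']
  have hmemV : ∀ a, Equiv.swap i j (u a) ∈ insert j K := by
    intro a
    rcases Finset.mem_insert.mp (humem a) with h | h
    · rw [h, Equiv.swap_apply_left]; exact Finset.mem_insert_self _ _
    · rw [Equiv.swap_apply_of_ne_of_ne (fun hh => hiK (by rw [← hh]; exact h))
        (fun hh => hjK (by rw [← hh]; exact h))]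
      exact Finset.mem_insert_of_mem h
  set g : Fin k → Fin k :=
    fun a => ((insert j K).orderIsoOfFin hV).symm ⟨Equiv.swap i j (u a), hmemV a⟩ with hg_def
  have hg : ∀ a, v (g a) = Equiv.swap i j (u a) := by
    intro a
    show (((insert j K).orderIsoOfFin hV) (((insert j K).orderIsoOfFin hV).symm
      ⟨Equiv.swap i j (u a), hmemV a⟩) : Fin n) = _
    rw [OrderIso.apply_symm_apply]
  have hginj : Function.Injective g := by
    intro a b h
    have h2 : v (g a) = v (g b) := congrArg v h
    rw [hg, hg] at h2
    exact hu ((Equiv.swap i j).injective h2)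
  set π : Equiv.Perm (Fin k) := Equiv.ofBijective g
    (Finite.injective_iff_bijective.mp hginj) with hπ_def
  have hπ : ∀ a, v (π a) = Equiv.swap i j (u a) := fun a => hg a
  have hWU : weightWSub r σ J hJ (insert i K) hU
      = ∑ τ : Equiv.Perm (Fin k), termF r idxJ (⇑σ) (fun a => u (τ a)) := by
    rw [weightWSub]
    refine Finset.sum_congr rfl fun τ _ => ?_
    exact term_rep r idxJ (⇑σ) (fun a => u (τ a))
  have hWV : weightWSub r σ J hJ (insert j K) hV
      = ∑ τ : Equiv.Perm (Fin k), termF r idxJ (⇑σ) (fun a => v (τ a)) := by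
    rw [weightWSub]
    refine Finset.sum_congr rfl fun τ _ => ?_
    exact term_rep r idxJ (⇑σ) (fun a => v (τ a))
  set x : ZField n := (∑ τ : Equiv.Perm (Fin k), termF r idxJ (⇑σ) (fun a => u (τ a))) -
      ∑ τ : Equiv.Perm (Fin k), termF r idxJ (⇑σ) (fun a => v (τ a)) with hx_def
  have hGD : GoodDiv (LZ i j) x := goodDiv_diff r idxJ σ u v hu hij huj π hπ
  obtain ⟨a0, b0, hb0, hx0⟩ := hGD
  have hqs : Prime (LZ i j) := prime_LZ hij
  have hq0 : (ιF (LZ i j) : ZField n) ≠ 0 := iota_ne (LZ_ne hij)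
  set y : ZField n := x * (ιF (LZ i j))⁻¹ with hy_def
  have hxy2 : x = y * ιF (LZ i j) := by
    rw [hy_def, mul_assoc, inv_mul_cancel₀ hq0, mul_one]
  have hyq : NoPole (LZ i j) y := by
    refine ⟨a0, b0, hb0, ?_⟩
    apply mul_right_cancel₀ hq0
    calc y * ιF b0 * ιF (LZ i j)
        = x * ιF b0 * ((ιF (LZ i j))⁻¹ * ιF (LZ i j)) := by rw [hy_def]; ring
      _ = x * ιF b0 := by rw [inv_mul_cancel₀ hq0, mul_one]
      _ = ιF (LZ i j * a0) := hx0
      _ = ιF a0 * ιF (LZ i j) := by rw [map_mul]; ring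
  set BU : MvPolynomial (ZVar n) ℂ :=
    ∏ τ : Equiv.Perm (Fin k), denPoly r (⇑σ) (fun a => u (τ a)) with hBU_def
  set BV : MvPolynomial (ZVar n) ℂ :=
    ∏ τ : Equiv.Perm (Fin k), denPoly r (⇑σ) (fun a => v (τ a)) with hBV_def
  have hBU0 : BU ≠ 0 := by
    rw [hBU_def, Finset.prod_ne_zero_iff]
    exact fun τ _ => denPoly_ne r (⇑σ) (fun a b h => τ.injective (hu h))
  have hBV0 : BV ≠ 0 := by
    rw [hBV_def, Finset.prod_ne_zero_iff]
    exact fun τ _ => denPoly_ne r (⇑σ) (fun a b h => τ.injective (hv h))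
  set NU : MvPolynomial (ZVar n) ℂ := ∑ τ : Equiv.Perm (Fin k),
      numPoly r idxJ (⇑σ) (fun a => u (τ a)) *
        ((∏ π' ∈ (univ : Finset (Equiv.Perm (Fin k))).erase τ,
          denPoly r (⇑σ) (fun a => u (π' a))) * BV) with hNU_def
  set NV : MvPolynomial (ZVar n) ℂ := ∑ τ : Equiv.Perm (Fin k),
      numPoly r idxJ (⇑σ) (fun a => v (τ a)) *
        (BU * ∏ π' ∈ (univ : Finset (Equiv.Perm (Fin k))).erase τ,
          denPoly r (⇑σ) (fun a => v (π' a))) with hNV_def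
  have hSUc : (∑ τ : Equiv.Perm (Fin k), termF r idxJ (⇑σ) (fun a => u (τ a))) *
      ιF (BU * BV) = ιF NU := by
    rw [Finset.sum_mul, hNU_def, map_sum]
    refine Finset.sum_congr rfl fun τ _ => ?_
    refine termF_mul r idxJ (⇑σ) (fun a b h => τ.injective (hu h)) _ _ ?_
    rw [hBU_def, ← Finset.mul_prod_erase univ
      (fun τ' : Equiv.Perm (Fin k) => denPoly r (⇑σ) (fun a => u (τ' a))) (mem_univ τ)]
    ring
  have hSVc : (∑ τ : Equiv.Perm (Fin k), termF r idxJ (⇑σ) (fun a => v (τ a))) *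
      ιF (BU * BV) = ιF NV := by
    rw [Finset.sum_mul, hNV_def, map_sum]
    refine Finset.sum_congr rfl fun τ _ => ?_
    refine termF_mul r idxJ (⇑σ) (fun a b h => τ.injective (hv h)) _ _ ?_
    rw [hBV_def, ← Finset.mul_prod_erase univ
      (fun τ' : Equiv.Perm (Fin k) => denPoly r (⇑σ) (fun a => v (τ' a))) (mem_univ τ)]
    ring
  have hyB : y * ιF (LZ i j * (BU * BV)) = ιF (NU - NV) := by
    calc y * ιF (LZ i j * (BU * BV))
        = x * ιF (BU * BV) * ((ιF (LZ i j))⁻¹ * ιF (LZ i j)) := by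
          rw [hy_def, map_mul]; ring
      _ = x * ιF (BU * BV) := by rw [inv_mul_cancel₀ hq0, mul_one]
      _ = ιF NU - ιF NV := by rw [hx_def, sub_mul, hSUc, hSVc]
      _ = ιF (NU - NV) := by rw [map_sub]
  have hBB0 : LZ i j * (BU * BV) ≠ 0 :=
    mul_ne_zero (LZ_ne hij) (mul_ne_zero hBU0 hBV0)
  have hNP : ∀ q' : MvPolynomial (ZVar n) ℂ, Prime q' → q' ∣ LZ i j * (BU * BV) →
      NoPole q' y := by
    intro q' hq' hdvd
    have transfer : ∀ ℓ : MvPolynomial (ZVar n) ℂ, Prime ℓ → q' ∣ ℓ → ¬ ℓ ∣ LZ i j →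
        NoPole ℓ x → NoPole q' y := by
      intro ℓ hℓ hqℓ hℓq hNPl
      have hassoc : Associated q' ℓ := hq'.associated_of_dvd hℓ hqℓ
      have hyl : NoPole ℓ y := by
        obtain ⟨a, b, hb, hab⟩ := hNPl
        refine ⟨a, b * LZ i j, fun hd => ?_, ?_⟩
        · rcases hℓ.dvd_mul.mp hd with hd | hd
          exacts [hb hd, hℓq hd]
        · calc y * ιF (b * LZ i j)
              = x * ιF b * ((ιF (LZ i j))⁻¹ * ιF (LZ i j)) := by
                rw [hy_def, map_mul]; ring
            _ = x * ιF b := by rw [inv_mul_cancel₀ hq0, mul_one]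
            _ = ιF a := hab
      exact NoPole.of_associated hassoc.symm hyl
    rcases hq'.dvd_mul.mp hdvd with hd | hd
    · exact NoPole.of_associated (hq'.associated_of_dvd hqs hd).symm hyq
    · have hxLZ : ∀ c d : Fin n, c ≠ d → NoPole (LZ c d) x := by
        intro c d hcd
        rw [hx_def]
        refine NoPole.sub (prime_LZ hcd) ?_ ?_
        · exact noPole_LZ_sum r idxJ σ u hu hcd
        · exact noPole_LZ_sum r idxJ σ v hv hcd
      have hxLH : ∀ c d : Fin n, NoPole (LH c d) x := by
        intro c d
        rw [hx_def]
        refine NoPole.sub (prime_LH c d) ?_ ?_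
        · exact NoPole.sum (prime_LH c d) fun τ _ =>
            noPole_LH_term r idxJ hmono σ (fun a b h => τ.injective (hu h)) c d
        · exact NoPole.sum (prime_LH c d) fun τ _ =>
            noPole_LH_term r idxJ hmono σ (fun a b h => τ.injective (hv h)) c d
      rcases hq'.dvd_mul.mp hd with hd | hd
      · rw [hBU_def] at hd
        obtain ⟨τ, _, hd⟩ := hq'.exists_mem_finset_dvd hd
        have hwinj : Function.Injective (fun a => u (τ a)) :=
          fun a b h => τ.injective (hu h)
        rcases den_factor_cases r hq' (⇑σ) _ hd with ⟨p, hp, hd⟩ | ⟨p, hp, hd⟩ | ⟨p, hd⟩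
        · have hcd : u (τ p.2) ≠ u (τ p.1) :=
            fun h => absurd (hwinj h) (ne_of_gt (mem_KP.mp hp))
          refine transfer _ (prime_LZ hcd) hd ?_ (hxLZ _ _ hcd)
          exact LZ_not_dvd_LZ hcd hij (fun hc => huj (τ p.1) hc.2.symm)
            (fun hc => huj (τ p.2) hc.2.symm)
        · exact transfer _ (prime_LH _ _) hd (LH_not_dvd_LZ _ _ hij) (hxLH _ _)
        · exact transfer _ (prime_LH _ _) hd (LH_not_dvd_LZ _ _ hij) (hxLH _ _)
      · rw [hBV_def] at hd
        obtain ⟨τ, _, hd⟩ := hq'.exists_mem_finset_dvd hd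
        have hwinj : Function.Injective (fun a => v (τ a)) :=
          fun a b h => τ.injective (hv h)
        rcases den_factor_cases r hq' (⇑σ) _ hd with ⟨p, hp, hd⟩ | ⟨p, hp, hd⟩ | ⟨p, hd⟩
        · have hcd : v (τ p.2) ≠ v (τ p.1) :=
            fun h => absurd (hwinj h) (ne_of_gt (mem_KP.mp hp))
          refine transfer _ (prime_LZ hcd) hd ?_ (hxLZ _ _ hcd)
          exact LZ_not_dvd_LZ hcd hij (fun hc => hvi (τ p.2) hc.1.symm)
            (fun hc => hvi (τ p.1) hc.1.symm)
        · exact transfer _ (prime_LH _ _) hd (LH_not_dvd_LZ _ _ hij) (hxLH _ _)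
        · exact transfer _ (prime_LH _ _) hd (LH_not_dvd_LZ _ _ hij) (hxLH _ _)
  obtain ⟨P, hP⟩ := eq_image_of_noPoles y (LZ i j * (BU * BV)) (NU - NV) hBB0 hyB hNP
  refine ⟨P, ?_⟩
  rw [hWU, hWV]
  show x = ιF ((MvPolynomial.X (Sum.inl i) - MvPolynomial.X (Sum.inl j)) * P)
  rw [hxy2, hP, ← map_mul]
  congr 1
  rw [mul_comm]
  rfl

end Final

end GKMaux

/-- GKM condition: for a `(k-1)`-element subset `K` and `i ≠ j` not
in `K`, with `U = K ∪ {i}` and `V = K ∪ {j}`, the difference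
`W^{(r)}_{σ,J}(z_U,z,ℏ) - W^{(r)}_{σ,J}(z_V,z,ℏ)` is divisible by `z_i - z_j`
in `ℂ[z₁,…,z_n,ℏ]`. -/
theorem weightWSub_GKM {n k : ℕ} (hkn : k ≤ n) (r : Bool × Bool)
    (σ : Equiv.Perm (Fin n)) (J : Finset (Fin n)) (hJ : J.card = k)
    (K : Finset (Fin n)) (hK : K.card + 1 = k) (i j : Fin n) (hij : i ≠ j)
    (hiK : i ∉ K) (hjK : j ∉ K) :
    ∃ p : MvPolynomial (ZVar n) ℂ,
      weightWSub r σ J hJ (insert i K)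
          (by rw [Finset.card_insert_of_notMem hiK]; exact hK) -
        weightWSub r σ J hJ (insert j K)
          (by rw [Finset.card_insert_of_notMem hjK]; exact hK) =
        algebraMap (MvPolynomial (ZVar n) ℂ) (ZField n)
          ((MvPolynomial.X (Sum.inl i) - MvPolynomial.X (Sum.inl j)) * p) := by
  classical
  exact GKMaux.gkm_main r σ J hJ K i j hij hiK hjK _ _
end
end

section
/- (Exactly one nonvanishing term in the self-substitution.) Let r ∈ {00,10,01,11} and I = {i_1 < … < i_k} ∈ I_k. For every permutation τ ∈ S_k with τ ≠ id, the rational function (τ U^{(r)}_I), i.e. U^{(r)}_I with t_a replaced by t_{τ(a)} for all a, becomes 0 after the substitution t_s = z_{i_s} (s = 1,…,k). Consequently W^{(r)}_I(z_I,z,ℏ) = U^{(r)}_I(z_I,z,ℏ). -/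
open Finset

noncomputable section

open scoped Classical

/-- exactly one nonvanishing term in the self-substitution: for
`τ ≠ id`, the term `(τ U^{(r)}_I)` becomes `0` after the substitution `t_s = z_{i_s}`;
consequently `W^{(r)}_I(z_I,z,ℏ)` equals the substituted `τ = id` term. -/
theorem superU_substitution_vanishes {n k : ℕ} (hkn : k ≤ n) (r : Bool × Bool)
    (I : Finset (Fin n)) (hI : I.card = k) :
    (∀ τ : Equiv.Perm (Fin k), τ ≠ 1 →
      superU r (setIdx I hI) (fun a => zval n (setIdx I hI (τ a))) (zval n) (hval n)
        = 0) ∧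
    (∑ τ : Equiv.Perm (Fin k),
        superU r (setIdx I hI) (fun a => zval n (setIdx I hI (τ a))) (zval n) (hval n))
      = superU r (setIdx I hI) (fun a => zval n (setIdx I hI a)) (zval n) (hval n) := by
  have main : ∀ τ : Equiv.Perm (Fin k), τ ≠ 1 →
      superU r (setIdx I hI) (fun a => zval n (setIdx I hI (τ a))) (zval n) (hval n)
        = 0 := by
    intro τ hτ
    have hex : ∃ a : Fin k, τ a ≠ a := by
      by_contra h
      push_neg at h
      exact hτ (Equiv.ext h)
    obtain ⟨a0, ha0⟩ := hex
    obtain ⟨a, ha, hmin⟩ := Finset.exists_min_image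
      (univ.filter fun a : Fin k => τ a ≠ a) id ⟨a0, by simp [ha0]⟩
    simp only [mem_filter, mem_univ, true_and] at ha
    have halt : a < τ a := by
      rcases lt_trichotomy a (τ a) with h | h | h
      · exact h
      · exact absurd h.symm ha
      · exfalso
        have hfix : τ (τ a) = τ a := by
          by_contra hh
          have := hmin (τ a) (by simp [hh])
          simp only [id] at this
          exact absurd h (not_lt.mpr this)
        exact ha (τ.injective hfix)
    have hidx : setIdx I hI a < setIdx I hI (τ a) := by
      have := (I.orderIsoOfFin hI).lt_iff_lt.mpr halt
      simpa [setIdx, Subtype.coe_lt_coe] using this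
    unfold superU
    rw [mul_eq_zero]; left
    rw [mul_eq_zero]; left
    apply Finset.prod_eq_zero (mem_univ a)
    rw [mul_eq_zero]; right
    apply Finset.prod_eq_zero
      (show setIdx I hI (τ a) ∈ univ.filter (fun b : Fin n => setIdx I hI a < b) by
        simp [hidx])
    simp
  refine ⟨main, ?_⟩
  rw [Fintype.sum_eq_single (1 : Equiv.Perm (Fin k)) (fun τ hτ => main τ hτ)]
  rfl
end
end
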